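/- arXiv:2208.06349 — 5 statements merged into one kernel-verified Lean document; each statement's English description precedes it below -/
import Mathlib

section
/- The Fresnel integrals C(x) = ∫_0^x cos(πt²/2) dt and S(x) = ∫_0^x sin(πt²/2) dt both converge to 1/2 as x → +∞. -/
/-!
For `0 ≤ re w`, `w ≠ 0`, integrating `exp (-w t²) = (-2 w t)⁻¹ · d/dt exp (-w t²)` by parts
gives `‖∫ t in a..b, exp (-w t²)‖ ≤ (‖w‖ a)⁻¹` for `0 < a ≤ b`. Since `‖w‖ ≤ ‖w + ε‖` for real
`ε ≥ 0`, this bound is uniform along the ray `w + ε`, so the partial integrals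
`∫ t in 0..x, exp (-(w + ε) t²)` converge uniformly in `ε ≥ 0` and their limit is continuous in `ε`.
For `ε > 0` the limit is the Gaussian integral `(π / (w + ε)) ^ (1/2) / 2`; letting `ε → 0` gives
`(π / w) ^ (1/2) / 2`. For `w = iπ/2` the partial integral is `C(x) - i S(x)` and the limit is
`(1 - i) / 2`.
-/

open Real Filter Complex Set MeasureTheory Topology
open scoped Interval

variable {w : ℂ} {a b : ℝ}

lemma integral_inv_sq_of_pos (ha : 0 < a) (hab : a ≤ b) :
    ∫ t in a..b, (t ^ 2)⁻¹ = a⁻¹ - b⁻¹ := by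
  have h0 : (0 : ℝ) ∉ [[a, b]] := by simp [uIcc_of_le hab, ha.not_ge]
  rw [(by simp : (fun t : ℝ => (t ^ 2)⁻¹) = fun t => t ^ (-2 : ℤ)),
    integral_zpow (Or.inr ⟨by norm_num, h0⟩)]
  norm_num
  ring

lemma norm_le_norm_add_ofReal {z : ℂ} (hz : 0 ≤ z.re) {ε : ℝ} (hε : 0 ≤ ε) : ‖z‖ ≤ ‖z + ε‖ := by
  rw [norm_eq_sqrt_sq_add_sq, norm_eq_sqrt_sq_add_sq]
  simp only [add_re, ofReal_re, add_im, ofReal_im, add_zero]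
  exact Real.sqrt_le_sqrt (by nlinarith)

lemma div_mem_slitPlane_of_re_nonneg {z : ℂ} (hz : 0 ≤ z.re) (hz₀ : z ≠ 0) {r : ℝ} (hr : 0 < r) :
    (r : ℂ) / z ∈ slitPlane := by
  simp only [mem_slitPlane_iff, div_re, div_im, ofReal_re, ofReal_im, zero_mul, zero_div,
    add_zero, zero_sub, neg_ne_zero, div_ne_zero_iff]
  rcases hz.lt_or_eq with hre | hre
  · exact Or.inl (div_pos (mul_pos hr hre) (normSq_pos.2 hz₀))
  · exact Or.inr ⟨mul_ne_zero hr.ne' fun him => hz₀ (ext hre.symm him), (normSq_pos.2 hz₀).ne'⟩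

lemma uniformCauchySeqOn_of_dist_le {β γ α : Type*} [SemilatticeSup β] [Nonempty β]
    [PseudoMetricSpace α] {F : β → γ → α} {s : Set γ} (bound : β → ℝ)
    (hbound : Tendsto bound atTop (𝓝 0))
    (h : ∀ᶠ m in atTop, ∀ n ≥ m, ∀ z ∈ s, dist (F n z) (F m z) ≤ bound m) :
    UniformCauchySeqOn F atTop s := by
  refine Metric.uniformCauchySeqOn_iff.2 fun δ hδ => ?_
  obtain ⟨N, hN⟩ := eventually_atTop.1 (h.and (hbound.eventually (gt_mem_nhds (half_pos hδ))))
  refine ⟨N, fun m hm n hn z hz => ?_⟩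
  calc dist (F m z) (F n z) ≤ dist (F m z) (F N z) + dist (F n z) (F N z) :=
        dist_triangle_right _ _ _
    _ ≤ bound N + bound N := add_le_add ((hN N le_rfl).1 m hm z hz) ((hN N le_rfl).1 n hn z hz)
    _ < δ := by linarith [(hN N le_rfl).2]

lemma continuous_cexp_neg_mul_sq (z : ℂ) : Continuous fun t : ℝ => cexp (-z * t ^ 2) := by
  fun_prop

lemma norm_cexp_neg_mul_sq_le_one (hw : 0 ≤ w.re) (t : ℝ) : ‖cexp (-w * t ^ 2)‖ ≤ 1 := by
  rw [norm_exp, Real.exp_le_one_iff, ← ofReal_pow, mul_comm, re_ofReal_mul, neg_re]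
  exact mul_nonpos_of_nonneg_of_nonpos (sq_nonneg t) (neg_nonpos.2 hw)

lemma hasDerivAt_neg_cexp_neg_mul_sq_div (hw : w ≠ 0) {t : ℝ} (ht : t ≠ 0) :
    HasDerivAt (fun s : ℝ => -cexp (-w * s ^ 2) / (2 * w * s))
      (cexp (-w * t ^ 2) + cexp (-w * t ^ 2) / (2 * w * t ^ 2)) t := by
  have ht' : (t : ℂ) ≠ 0 := ofReal_ne_zero.2 ht
  have h := (((hasDerivAt_pow 2 (t : ℂ)).const_mul (-w)).cexp.neg.div
    ((hasDerivAt_id (t : ℂ)).const_mul (2 * w)) (by simp [hw, ht'])).comp_ofReal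
  convert h using 1
  · simp
  · simp only [id, Pi.neg_apply, Nat.cast_ofNat]
    field_simp
    ring

lemma integral_cexp_neg_mul_sq_eq (hw : w ≠ 0) (ha : 0 < a) (hab : a ≤ b) :
    ∫ t in a..b, cexp (-w * t ^ 2) =
      (-cexp (-w * b ^ 2) / (2 * w * b) - -cexp (-w * a ^ 2) / (2 * w * a)) -
        ∫ t in a..b, cexp (-w * t ^ 2) / (2 * w * t ^ 2) := by
  have hne : ∀ t ∈ [[a, b]], t ≠ 0 := fun t ht => by
    rw [uIcc_of_le hab] at ht
    exact (ha.trans_le ht.1).ne'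
  have hint₁ : IntervalIntegrable (fun t : ℝ => cexp (-w * t ^ 2)) volume a b :=
    (continuous_cexp_neg_mul_sq w).intervalIntegrable a b
  have hint₂ : IntervalIntegrable (fun t : ℝ => cexp (-w * t ^ 2) / (2 * w * t ^ 2)) volume a b :=
    ContinuousOn.intervalIntegrable <| ContinuousOn.div (by fun_prop) (by fun_prop)
      fun t ht => by simp [hw, hne t ht]
  rw [eq_sub_iff_add_eq, ← intervalIntegral.integral_add hint₁ hint₂,
    intervalIntegral.integral_eq_sub_of_hasDerivAt
      (fun t ht => hasDerivAt_neg_cexp_neg_mul_sq_div hw (hne t ht)) (hint₁.add hint₂)]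

lemma norm_integral_cexp_neg_mul_sq_le (hw : 0 ≤ w.re) (hw₀ : w ≠ 0) (ha : 0 < a) (hab : a ≤ b) :
    ‖∫ t in a..b, cexp (-w * t ^ 2)‖ ≤ (‖w‖ * a)⁻¹ := by
  have hw' : 0 < ‖w‖ := norm_pos_iff.2 hw₀
  have hboundary : ∀ t : ℝ, 0 < t → ‖-cexp (-w * t ^ 2) / (2 * w * t)‖ ≤ (2 * ‖w‖ * t)⁻¹ := by
    intro t ht
    rw [norm_div, norm_neg, div_eq_mul_inv]
    simpa [abs_of_pos ht] using
      mul_le_of_le_one_left (by positivity) (norm_cexp_neg_mul_sq_le_one hw t)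
  have hrest : ‖∫ t in a..b, cexp (-w * t ^ 2) / (2 * w * t ^ 2)‖ ≤
      (2 * ‖w‖)⁻¹ * (a⁻¹ - b⁻¹) := by
    rw [← integral_inv_sq_of_pos ha hab, ← intervalIntegral.integral_const_mul]
    refine intervalIntegral.norm_integral_le_of_norm_le hab (Eventually.of_forall fun t _ => ?_) ?_
    · rw [norm_div, div_eq_mul_inv, ← mul_inv]
      simpa using mul_le_of_le_one_left (by positivity) (norm_cexp_neg_mul_sq_le_one hw t)
    · refine ContinuousOn.intervalIntegrable (continuousOn_const.mul ?_)
      refine ContinuousOn.inv₀ (by fun_prop) fun t ht => ?_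
      rw [uIcc_of_le hab] at ht
      exact pow_ne_zero 2 (ha.trans_le ht.1).ne'
  rw [integral_cexp_neg_mul_sq_eq hw₀ ha hab]
  calc _ ≤ ‖-cexp (-w * b ^ 2) / (2 * w * b)‖ + ‖-cexp (-w * a ^ 2) / (2 * w * a)‖ +
          ‖∫ t in a..b, cexp (-w * t ^ 2) / (2 * w * t ^ 2)‖ :=
        (norm_sub_le _ _).trans (add_le_add_left (norm_sub_le _ _) _)
    _ ≤ (2 * ‖w‖ * b)⁻¹ + (2 * ‖w‖ * a)⁻¹ + (2 * ‖w‖)⁻¹ * (a⁻¹ - b⁻¹) :=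
        add_le_add (add_le_add (hboundary b (ha.trans_le hab)) (hboundary a ha)) hrest
    _ = (‖w‖ * a)⁻¹ := by field_simp; ring

lemma uniformCauchySeqOn_integral_cexp_neg_add_mul_sq (hw : 0 ≤ w.re) (hw₀ : w ≠ 0) :
    UniformCauchySeqOn (fun x ε : ℝ => ∫ t in (0 : ℝ)..x, cexp (-(w + ε) * t ^ 2))
      atTop (Ici 0) := by
  refine uniformCauchySeqOn_of_dist_le (fun x => (‖w‖ * x)⁻¹)
    (tendsto_inv_atTop_zero.comp (tendsto_id.const_mul_atTop (norm_pos_iff.2 hw₀))) ?_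
  filter_upwards [eventually_gt_atTop 0] with x hx y hxy ε (hε : 0 ≤ ε)
  have hre : 0 ≤ (w + ε).re := by simp only [add_re, ofReal_re]; linarith
  have hnorm := norm_le_norm_add_ofReal hw hε
  have hne : w + ε ≠ 0 := norm_pos_iff.1 ((norm_pos_iff.2 hw₀).trans_le hnorm)
  rw [dist_eq_norm, intervalIntegral.integral_interval_sub_left
    ((continuous_cexp_neg_mul_sq _).intervalIntegrable _ _)
    ((continuous_cexp_neg_mul_sq _).intervalIntegrable _ _)]
  exact (norm_integral_cexp_neg_mul_sq_le hre hne hx hxy).trans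
    (inv_anti₀ (by positivity) (by gcongr))

lemma tendsto_integral_cexp_neg_mul_sq_of_re_pos (hw : 0 < w.re) :
    Tendsto (fun x : ℝ => ∫ t in (0 : ℝ)..x, cexp (-w * t ^ 2)) atTop
      (𝓝 ((π / w) ^ (1 / 2 : ℂ) / 2)) := by
  rw [← integral_gaussian_complex_Ioi hw]
  exact intervalIntegral_tendsto_integral_Ioi 0 (integrable_cexp_neg_mul_sq hw).integrableOn
    tendsto_id

theorem tendsto_integral_cexp_neg_mul_sq_of_re_nonneg (hw : 0 ≤ w.re) (hw₀ : w ≠ 0) :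
    Tendsto (fun x : ℝ => ∫ t in (0 : ℝ)..x, cexp (-w * t ^ 2)) atTop
      (𝓝 ((π / w) ^ (1 / 2 : ℂ) / 2)) := by
  set G : ℝ → ℝ → ℂ := fun x ε => ∫ t in (0 : ℝ)..x, cexp (-(w + ε) * t ^ 2)
  have hG := uniformCauchySeqOn_integral_cexp_neg_add_mul_sq hw hw₀
  set F : ℝ → ℂ := fun ε => limUnder atTop (G · ε)
  have hF : TendstoUniformlyOn G F atTop (Ici 0) :=
    hG.tendstoUniformlyOn_of_tendsto fun ε hε => (hG.cauchySeq hε).tendsto_limUnder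
  have hF_cont : ContinuousWithinAt F (Ioi 0) 0 :=
    (hF.continuousOn (Frequently.of_forall fun _ => Continuous.continuousOn (by fun_prop))
      0 self_mem_Ici).mono Ioi_subset_Ici_self
  have hF_pos : ∀ ε ∈ Ioi (0 : ℝ), F ε = (π / (w + ε)) ^ (1 / 2 : ℂ) / 2 := fun ε hε =>
    tendsto_nhds_unique (hF.tendsto_at (Ioi_subset_Ici_self hε))
      (tendsto_integral_cexp_neg_mul_sq_of_re_pos
        (by simp only [add_re, ofReal_re]; linarith [mem_Ioi.1 hε]))
  have hF_zero : F 0 = (π / w) ^ (1 / 2 : ℂ) / 2 := by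
    have hvalue : ContinuousAt (fun z : ℂ => (π / z) ^ (1 / 2 : ℂ) / 2) w :=
      ((continuousAt_cpow_const (div_mem_slitPlane_of_re_nonneg hw hw₀ pi_pos)).comp
        (continuousAt_const.div continuousAt_id hw₀)).div_const 2
    have hray : Tendsto (fun ε : ℝ => w + ε) (𝓝[>] 0) (𝓝 w) := by
      simpa using (tendsto_const_nhds.add (continuous_ofReal.tendsto 0)).mono_left
        nhdsWithin_le_nhds
    exact tendsto_nhds_unique (hF_cont.tendsto.congr' (eventually_nhdsWithin_of_forall hF_pos))
      (hvalue.tendsto.comp hray)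
  simpa [G, hF_zero] using hF.tendsto_at (self_mem_Ici (a := (0 : ℝ)))

lemma cexp_neg_pi_div_two_mul_I_mul_sq (t : ℝ) :
    cexp (-(π / 2 * I) * t ^ 2) = Real.cos (π * t ^ 2 / 2) - Real.sin (π * t ^ 2 / 2) * I := by
  rw [show -(π / 2 * I) * t ^ 2 = ((-(π * t ^ 2 / 2) : ℝ) : ℂ) * I by push_cast; ring,
    exp_mul_I, ← ofReal_cos, ← ofReal_sin, Real.cos_neg, Real.sin_neg, ofReal_neg]
  ring

lemma integral_cexp_neg_pi_div_two_mul_I_mul_sq (x : ℝ) :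
    ∫ t in (0 : ℝ)..x, cexp (-(π / 2 * I) * t ^ 2) =
      (∫ t in (0 : ℝ)..x, Real.cos (π * t ^ 2 / 2) : ℝ) -
        (∫ t in (0 : ℝ)..x, Real.sin (π * t ^ 2 / 2) : ℝ) * I := by
  simp_rw [cexp_neg_pi_div_two_mul_I_mul_sq]
  rw [intervalIntegral.integral_sub (Continuous.intervalIntegrable (by fun_prop) _ _)
      (Continuous.intervalIntegrable (by fun_prop) _ _),
    intervalIntegral.integral_mul_const, intervalIntegral.integral_ofReal,
    intervalIntegral.integral_ofReal]

lemma pi_div_pi_div_two_mul_I_cpow_one_div_two :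
    (π / (π / 2 * I) : ℂ) ^ (1 / 2 : ℂ) = 1 - I := by
  have hsq : (π / (π / 2 * I) : ℂ) = (1 - I) ^ 2 := by
    field_simp
    ring_nf
    simp
  rw [hsq, one_div (2 : ℂ), sq_cpow_two_inv (by simp)]

theorem fresnel_integrals_tendsto_half :
    Tendsto (fun x : ℝ => ∫ t in (0:ℝ)..x, Real.cos (π * t ^ 2 / 2)) atTop (nhds (1/2)) ∧
    Tendsto (fun x : ℝ => ∫ t in (0:ℝ)..x, Real.sin (π * t ^ 2 / 2)) atTop (nhds (1/2)) := by
  have h := tendsto_integral_cexp_neg_mul_sq_of_re_nonneg (w := π / 2 * I) (by simp)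
    (by simp [pi_ne_zero])
  simp_rw [pi_div_pi_div_two_mul_I_cpow_one_div_two,
    integral_cexp_neg_pi_div_two_mul_I_mul_sq] at h
  constructor
  · simpa [Function.comp_def] using (continuous_re.tendsto _).comp h
  · simpa [neg_div] using ((continuous_im.tendsto _).comp h).neg
end

section
/- For fixed r > 0 and a ≠ 0, the double-integral beamforming-gain approximation (1/(N₁N₂))·|∫_{-N₁/2}^{N₁/2} ∫_{-N₂/2}^{N₂/2} e^{i a n₁ n₂} dn₁ dn₂| equals |Si(η)/η| with η = a N₁ N₂ / 4, where Si(x) = ∫_0^x (sin t)/t dt. -/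
open Real Filter Complex

open MeasureTheory

/-!
The inner integral is the Fourier transform of the box `[-N₂/2, N₂/2]`, namely the real number
`N₂ sinc (a N₂ n₁ / 2)`. Substituting `t = a N₂ n₁ / 2` in the outer integral of this even function
gives `(4 / a) Si η`, and `4 / a = N₁ N₂ / η`.
-/

/-- The sine integral `Si x = ∫_0^x (sin t)/t dt`. -/
noncomputable def Si (x : ℝ) : ℝ := ∫ t in (0:ℝ)..x, Real.sin t / t

theorem integral_exp_I_mul_eq_sinc (c L : ℝ) :
    ∫ t in (-L)..L, Complex.exp (Complex.I * ((c * t : ℝ) : ℂ)) =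
      ((2 * L * Real.sinc (c * L) : ℝ) : ℂ) := by
  rcases eq_or_ne c 0 with rfl | hc
  · simp only [zero_mul, Complex.ofReal_zero, mul_zero, Complex.exp_zero,
      intervalIntegral.integral_const, Real.sinc_zero]
    rw [Complex.real_smul]
    push_cast
    ring
  have hc' : (c : ℂ) ≠ 0 := Complex.ofReal_ne_zero.mpr hc
  calc ∫ t in (-L)..L, Complex.exp (Complex.I * ((c * t : ℝ) : ℂ))
      = c⁻¹ • ∫ t in (-(c * L))..(c * L), Complex.exp (t * Complex.I) := by
        simpa only [mul_comm Complex.I, mul_neg] using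
          intervalIntegral.integral_comp_mul_left (fun t : ℝ => Complex.exp (t * Complex.I)) hc
            (a := -L) (b := L)
    _ = ((2 * L * Real.sinc (c * L) : ℝ) : ℂ) := by
        rw [integral_exp_mul_I_eq_sinc, Complex.real_smul]
        push_cast
        field_simp

theorem integral_zero_sinc_eq_Si (x : ℝ) : ∫ t in (0:ℝ)..x, Real.sinc t = Si x := by
  refine intervalIntegral.integral_congr_ae ?_
  have hae : ∀ᵐ t : ℝ, t ≠ 0 := by simp [ae_iff]
  filter_upwards [hae] with t ht _
  exact Real.sinc_of_ne_zero ht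

theorem integral_neg_sinc_eq_two_mul_Si (x : ℝ) : ∫ t in (-x)..x, Real.sinc t = 2 * Si x := by
  have hleft : ∫ t in (-x)..0, Real.sinc t = Si x := by
    simpa [Real.sinc_neg, integral_zero_sinc_eq_Si] using
      (intervalIntegral.integral_comp_neg (a := 0) (b := x) Real.sinc).symm
  rw [← intervalIntegral.integral_add_adjacent_intervals
      (Real.continuous_sinc.intervalIntegrable (-x) 0) (Real.continuous_sinc.intervalIntegrable 0 x),
    hleft, integral_zero_sinc_eq_Si, two_mul]

theorem integral_neg_sinc_mul_eq_Si_div {k : ℝ} (hk : k ≠ 0) (L : ℝ) :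
    ∫ t in (-L)..L, Real.sinc (k * t) = 2 * Si (k * L) / k := by
  rw [intervalIntegral.integral_comp_mul_left _ hk, mul_neg, integral_neg_sinc_eq_two_mul_Si,
    smul_eq_mul, inv_mul_eq_div]

theorem UPA_bilinear_gain_eq_Si (a N₁ N₂ : ℝ) (ha : a ≠ 0) (hN₁ : 0 < N₁) (hN₂ : 0 < N₂) :
    (1 / (N₁ * N₂)) *
      ‖(∫ n₁ in (-(N₁/2))..(N₁/2), ∫ n₂ in (-(N₂/2))..(N₂/2),
        Complex.exp (Complex.I * ((a * n₁ * n₂ : ℝ) : ℂ)))‖ =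
    |Si (a * N₁ * N₂ / 4) / (a * N₁ * N₂ / 4)| := by
  have hk : a * N₂ / 2 ≠ 0 := by positivity
  have hinner (n₁ : ℝ) :
      ∫ n₂ in (-(N₂/2))..(N₂/2), Complex.exp (Complex.I * ((a * n₁ * n₂ : ℝ) : ℂ)) = ((N₂ * Real.sinc (a * N₂ / 2 * n₁) : ℝ) : ℂ) := by
    rw [integral_exp_I_mul_eq_sinc]
    ring_nf
  have hη : a * N₂ / 2 * (N₁ / 2) = a * N₁ * N₂ / 4 := by ring
  simp_rw [hinner]
  have hgain : N₂ * (2 * Si (a * N₁ * N₂ / 4) / (a * N₂ / 2))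
      = N₁ * N₂ * (Si (a * N₁ * N₂ / 4) / (a * N₁ * N₂ / 4)) := by
    field_simp
    ring
  rw [intervalIntegral.integral_ofReal, intervalIntegral.integral_const_mul,
    integral_neg_sinc_mul_eq_Si_div hk, hη, hgain, Complex.norm_real, Real.norm_eq_abs, abs_mul,
    abs_of_pos (mul_pos hN₁ hN₂), one_div, inv_mul_cancel_left₀ (by positivity)]
end

section
/- The function x ↦ Si(x)/x, where Si(x) = ∫_0^x (sin t)/t dt, is strictly decreasing on the interval (0, π]. -/
open Real

/-!
`(Si x / x)' = (sin x - Si x) / x²`, so it suffices that `Si x > sin x` on `(0, π]`. Writing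
`Si x - sin x = ∫_0^x (sinc t - cos t) dt`, this follows from `t cos t < sin t` on `(0, π)`:
below `π / 2` this is `t < tan t`, above it `cos t ≤ 0 < sin t`.
-/

open MeasureTheory

-- The integrands differ only at `0`, where `sin 0 / 0 = 0` but `sinc 0 = 1`.
theorem Si_eq_integral_sinc (x : ℝ) : Si x = ∫ t in (0:ℝ)..x, sinc t :=
  intervalIntegral.integral_congr_ae <| (Measure.ae_ne volume 0).mono
    fun _ ht _ => (sinc_of_ne_zero ht).symm

theorem hasDerivAt_Si (x : ℝ) : HasDerivAt Si (sinc x) x := by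
  simpa only [← Si_eq_integral_sinc] using
    (continuous_sinc.integral_hasStrictDerivAt 0 x).hasDerivAt

theorem hasDerivAt_Si_div {x : ℝ} (hx : x ≠ 0) :
    HasDerivAt (fun x => Si x / x) ((sin x - Si x) / x ^ 2) x := by
  refine ((hasDerivAt_Si x).div (hasDerivAt_id x) hx).congr_deriv ?_
  rw [sinc_of_ne_zero hx, id, div_mul_cancel₀ _ hx, mul_one]

theorem mul_cos_lt_sin {t : ℝ} (ht₀ : 0 < t) (htπ : t < π) : t * cos t < sin t := by
  rcases lt_or_ge t (π / 2) with ht | ht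
  · have hcos : 0 < cos t := cos_pos_of_mem_Ioo ⟨by linarith [pi_pos], ht⟩
    simpa only [tan_eq_sin_div_cos, lt_div_iff₀ hcos] using lt_tan ht₀ ht
  · have hcos : cos t ≤ 0 := cos_nonpos_of_pi_div_two_le_of_le ht (by linarith)
    exact (mul_nonpos_of_nonneg_of_nonpos ht₀.le hcos).trans_lt
      (sin_pos_of_pos_of_lt_pi ht₀ htπ)

theorem cos_lt_sinc {t : ℝ} (ht₀ : 0 < t) (htπ : t < π) : cos t < sinc t := by
  rw [sinc_of_ne_zero ht₀.ne', lt_div_iff₀ ht₀, mul_comm]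
  exact mul_cos_lt_sin ht₀ htπ

theorem sin_lt_Si {x : ℝ} (hx₀ : 0 < x) (hxπ : x ≤ π) : sin x < Si x := by
  have hpos : 0 < ∫ t in (0:ℝ)..x, (sinc t - cos t) :=
    intervalIntegral.intervalIntegral_pos_of_pos_on
      ((continuous_sinc.sub continuous_cos).intervalIntegrable 0 x)
      (fun t ht => sub_pos.2 (cos_lt_sinc ht.1 (ht.2.trans_le hxπ))) hx₀
  rw [intervalIntegral.integral_sub (continuous_sinc.intervalIntegrable 0 x)
    (continuous_cos.intervalIntegrable 0 x), integral_cos, sin_zero, sub_zero,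
    ← Si_eq_integral_sinc] at hpos
  linarith

theorem Si_div_strictAnti : StrictAntiOn (fun x : ℝ => Si x / x) (Set.Ioc 0 π) := by
  refine strictAntiOn_of_hasDerivWithinAt_neg (convex_Ioc 0 π)
    (fun x hx => (hasDerivAt_Si_div hx.1.ne').continuousAt.continuousWithinAt)
    (fun x hx => (hasDerivAt_Si_div (interior_subset hx).1.ne').hasDerivWithinAt) ?_
  rw [interior_Ioc]
  exact fun x hx => div_neg_of_neg_of_pos (sub_neg.2 (sin_lt_Si hx.1 hx.2.le)) (pow_pos hx.1 2)
end

section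
/- With θ_i defined by θ_{-1}=0, θ_0=1, θ_i = θ_{i-1} − c θ_{i-2} and 0 ≤ c < 1/4, every θ_i > 0 for i ≥ 0, and for each fixed K ≥ 1 and 1 ≤ k ≤ K the quantity γ_k(c) = θ_{k-1}θ_{K-k}/θ_K is monotonically nondecreasing in c, with γ_k(0) = 1. -/
theorem continuant_positive_and_gamma_monotone (θ : ℝ → ℕ → ℝ)
    (h0 : ∀ c, θ c 0 = 0) (h1 : ∀ c, θ c 1 = 1)
    (hrec : ∀ c i, θ c (i + 2) = θ c (i + 1) - c * θ c i)
    (K k : ℕ) (hK : 1 ≤ K) (hk : 1 ≤ k) (hkK : k ≤ K) :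
    (∀ c : ℝ, 0 ≤ c → c < 1 / 4 → ∀ i : ℕ, 1 ≤ i → 0 < θ c i) ∧
    MonotoneOn (fun c : ℝ => θ c k * θ c (K - k + 1) / θ c (K + 1))
      (Set.Ico (0 : ℝ) (1 / 4)) ∧
    θ 0 k * θ 0 (K - k + 1) / θ 0 (K + 1) = 1 := by
  -- positivity core lemma
  have pos : ∀ c : ℝ, 0 ≤ c → c < 1 / 4 →
      ∀ n : ℕ, 0 < θ c (n + 1) ∧ θ c n ≤ 2 * θ c (n + 1) := by
    intro c hc hc4 n
    induction n with
    | zero => rw [h0, h1]; norm_num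
    | succ n ih =>
      obtain ⟨hp, hle⟩ := ih
      have hr := hrec c n
      have hmul := mul_le_mul_of_nonneg_left hle hc
      constructor
      · nlinarith
      · nlinarith
  have posn : ∀ c : ℝ, 0 ≤ c → c < 1 / 4 → ∀ i : ℕ, 1 ≤ i → 0 < θ c i := by
    intro c hc hc4 i hi
    obtain ⟨n, rfl⟩ : ∃ n, i = n + 1 := ⟨i - 1, by omega⟩
    exact (pos c hc hc4 n).1
  -- addition identity
  have addid : ∀ (c : ℝ) (n m : ℕ),
      θ c (m + n + 1) = θ c (m + 1) * θ c (n + 1) - c * (θ c m * θ c n) := by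
    intro c n
    induction n using Nat.twoStepInduction with
    | zero => intro m; simp [h0, h1]
    | one =>
      intro m
      have h2 : θ c 2 = 1 := by rw [hrec, h1, h0]; ring
      have : θ c (m + 1 + 1) = θ c (m + 1) - c * θ c m := hrec c m
      rw [this]
      norm_num [h1, h2]
    | more n ih1 ih2 =>
      intro m
      have e1 : m + (n + 2) + 1 = (m + n + 1) + 2 := by ring
      rw [e1, hrec c (m + n + 1)]
      have e2 : m + n + 1 + 1 = m + (n + 1) + 1 := by ring
      rw [e2, ih2 m, ih1 m]
      have e3 : n + 2 + 1 = (n + 1) + 2 := by ring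
      rw [e3, hrec c (n + 1), hrec c n]
      ring
  -- monotonicity in c of ratios
  have mono : ∀ c c' : ℝ, 0 ≤ c → c ≤ c' → c' < 1 / 4 → ∀ n : ℕ,
      c * (θ c n / θ c (n + 1)) ≤ c' * (θ c' n / θ c' (n + 1)) ∧
      θ c' (n + 2) / θ c' (n + 1) ≤ θ c (n + 2) / θ c (n + 1) := by
    intro c c' hc hcc hc4 n
    have hc' : 0 ≤ c' := le_trans hc hcc
    have hc4' : c < 1 / 4 := lt_of_le_of_lt hcc hc4
    have ratio_rec : ∀ (a : ℝ), 0 ≤ a → a < 1 / 4 → ∀ m : ℕ,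
        θ a (m + 2) / θ a (m + 1) = 1 - a * (θ a m / θ a (m + 1)) := by
      intro a ha ha4 m
      have hp := (pos a ha ha4 m).1
      rw [hrec a m, sub_div, div_self (ne_of_gt hp), mul_div_assoc]
    induction n with
    | zero =>
      constructor
      · simp [h0]
      · rw [ratio_rec c hc hc4' 0, ratio_rec c' hc' hc4 0]
        simp [h0]
    | succ n ih =>
      obtain ⟨ihs, ihr⟩ := ih
      have hp1 : 0 < θ c (n + 1) := (pos c hc hc4' n).1
      have hp2 : 0 < θ c (n + 2) := (pos c hc hc4' (n + 1)).1
      have hp1' : 0 < θ c' (n + 1) := (pos c' hc' hc4 n).1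
      have hp2' : 0 < θ c' (n + 2) := (pos c' hc' hc4 (n + 1)).1
      have key : θ c (n + 1) / θ c (n + 2) ≤ θ c' (n + 1) / θ c' (n + 2) := by
        rw [div_le_div_iff₀ hp2 hp2']
        rw [div_le_div_iff₀ hp1' hp1] at ihr
        nlinarith [ihr]
      have hs : c * (θ c (n + 1) / θ c (n + 2)) ≤ c' * (θ c' (n + 1) / θ c' (n + 2)) := by
        have hx : 0 ≤ θ c (n + 1) / θ c (n + 2) := le_of_lt (div_pos hp1 hp2)
        exact mul_le_mul hcc key hx hc'
      refine ⟨hs, ?_⟩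
      rw [ratio_rec c hc hc4' (n + 1), ratio_rec c' hc' hc4 (n + 1)]
      linarith
  refine ⟨posn, ?_, ?_⟩
  · -- MonotoneOn
    intro c hc c' hc' hcc
    obtain ⟨hc0, hc4⟩ := hc
    obtain ⟨hc0', hc4'⟩ := hc'
    simp only
    -- auxiliary facts for a ∈ {c, c'}
    have main : ∀ a : ℝ, 0 ≤ a → a < 1 / 4 →
        θ a k * θ a (K - k + 1) / θ a (K + 1)
          = (θ a (K - k + 2) / θ a (K - k + 1) - a * (θ a (k - 1) / θ a k))⁻¹ ∧
        0 < θ a (K - k + 2) / θ a (K - k + 1) - a * (θ a (k - 1) / θ a k) := by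
      intro a ha ha4
      have hpk : 0 < θ a k := posn a ha ha4 k hk
      have hpKk : 0 < θ a (K - k + 1) := posn a ha ha4 (K - k + 1) (by omega)
      have hpK : 0 < θ a (K + 1) := posn a ha ha4 (K + 1) (by omega)
      have hid := addid a (K - k + 1) (k - 1)
      have e1 : k - 1 + (K - k + 1) + 1 = K + 1 := by omega
      have e2 : k - 1 + 1 = k := by omega
      have e3 : K - k + 1 + 1 = K - k + 2 := by omega
      rw [e1, e2, e3] at hid
      have hg : θ a (K - k + 2) / θ a (K - k + 1) - a * (θ a (k - 1) / θ a k)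
          = θ a (K + 1) / (θ a k * θ a (K - k + 1)) := by
        rw [hid]
        field_simp
      constructor
      · rw [hg, inv_div]
      · rw [hg]
        positivity
    obtain ⟨hfc, hgc⟩ := main c hc0 hc4
    obtain ⟨hfc', hgc'⟩ := main c' hc0' hc4'
    rw [hfc, hfc']
    have hm1 := (mono c c' hc0 hcc hc4' (k - 1)).1
    have hm2 := (mono c c' hc0 hcc hc4' (K - k)).2
    have e2 : k - 1 + 1 = k := by omega
    rw [e2] at hm1
    have hgle : θ c' (K - k + 2) / θ c' (K - k + 1) - c' * (θ c' (k - 1) / θ c' k)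
        ≤ θ c (K - k + 2) / θ c (K - k + 1) - c * (θ c (k - 1) / θ c k) := by
      linarith
    exact inv_anti₀ hgc' hgle
  · -- value at 0
    have hone : ∀ n : ℕ, θ 0 (n + 1) = 1 := by
      intro n
      induction n with
      | zero => exact h1 0
      | succ n ih => rw [hrec 0 n, ih]; ring
    obtain ⟨a, ha⟩ : ∃ a, k = a + 1 := ⟨k - 1, by omega⟩
    rw [ha, hone, hone, hone]
    norm_num
end

section
/- Let ζ₁ > 0, ζ₂, ζ₃ ∈ ℝ. Then lim_{N₁→∞} (1/(N₁N₂)) |∫_{-N₂/2}^{N₂/2} ∫_{-N₁/2}^{N₁/2} e^{i(ζ₁(n₁ − ζ₂n₂)² + ζ₃ n₂²)} dn₁ dn₂| = 0 for any fixed N₂ > 0. -/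
/-!
The substitution `n₁ ↦ n₁ - ζ₂ n₂` together with `|e^{iζ₃n₂²}| = 1` reduces the inner integral to
an integral of the chirp `t ↦ e^{iζ₁t²}` over a window of length `N₁`. Such integrals are bounded
independently of the window: on `[a, b] ⊆ (0, ∞)` integrating by parts against
`d/dt e^{iζt²} = 2iζt e^{iζt²}` gives the bound `1 / (|ζ| a)`, the piece near the origin is bounded
by its length, and the chirp is even. Hence the double integral is `O(N₂)` uniformly in `N₁`, and
dividing by `N₁ N₂` sends it to `0`.
-/

open Real Filter Complex intervalIntegral

noncomputable def chirp (ζ t : ℝ) : ℂ := cexp (I * ↑(ζ * t ^ 2))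

lemma norm_chirp (ζ t : ℝ) : ‖chirp ζ t‖ = 1 :=
  norm_exp_I_mul_ofReal _

lemma continuous_chirp (ζ : ℝ) : Continuous (chirp ζ) := by
  unfold chirp; fun_prop

lemma chirp_neg (ζ t : ℝ) : chirp ζ (-t) = chirp ζ t := by
  simp [chirp]

lemma hasDerivAt_chirp (ζ t : ℝ) : HasDerivAt (chirp ζ) (2 * ζ * t * I * chirp ζ t) t := by
  have h := ((((hasDerivAt_pow 2 t).const_mul ζ).ofReal_comp).const_mul I).cexp
  exact h.congr_deriv (by simp only [chirp]; push_cast; ring)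

lemma norm_integral_chirp_le_of_pos {ζ a b : ℝ} (hζ : ζ ≠ 0) (ha : 0 < a) (hab : a ≤ b) :
    ‖∫ t in a..b, chirp ζ t‖ ≤ (|ζ| * a)⁻¹ := by
  set v : ℝ → ℂ := fun t => -I / (2 * ζ) * chirp ζ t
  set K : ℝ := (2 * |ζ|)⁻¹
  have hpos : ∀ t ∈ Set.uIcc a b, 0 < t := fun t ht =>
    ha.trans_le (Set.uIcc_of_le hab ▸ ht).1
  have hu : ∀ t ∈ Set.uIcc a b, HasDerivAt (fun t : ℝ => t⁻¹) (-(t ^ 2)⁻¹) t :=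
    fun t ht => hasDerivAt_inv (hpos t ht).ne'
  have hv : ∀ t ∈ Set.uIcc a b, HasDerivAt v ((t : ℂ) * chirp ζ t) t := fun t _ =>
    ((hasDerivAt_chirp ζ t).const_mul _).congr_deriv (by
      field_simp [ofReal_ne_zero.2 hζ]; linear_combination (-(t : ℂ) * chirp ζ t) * I_sq)
  have hinv_sq : IntervalIntegrable (fun t : ℝ => (t ^ 2)⁻¹) MeasureTheory.volume a b :=
    (continuousOn_id.pow 2 |>.inv₀ fun t ht => pow_ne_zero 2 (hpos t ht).ne').intervalIntegrable
  have hv' : IntervalIntegrable (fun t : ℝ => (t : ℂ) * chirp ζ t) MeasureTheory.volume a b :=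
    (continuous_ofReal.mul (continuous_chirp ζ)).intervalIntegrable a b
  have hnorm_v : ∀ t, ‖v t‖ = K := fun t => by
    simp [v, K, norm_chirp]
  have hparts : ∫ t in a..b, chirp ζ t =
      b⁻¹ • v b - a⁻¹ • v a - ∫ t in a..b, -(t ^ 2)⁻¹ • v t := by
    rw [← integral_smul_deriv_eq_deriv_smul hu hv hinv_sq.neg hv']
    refine integral_congr fun t ht => ?_
    simp [Complex.real_smul, (hpos t ht).ne']
  have hrem : ‖∫ t in a..b, -(t ^ 2)⁻¹ • v t‖ ≤ K * (a⁻¹ - b⁻¹) :=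
    calc _ ≤ ∫ t in a..b, K * (t ^ 2)⁻¹ := by
          refine norm_integral_le_of_norm_le hab (.of_forall fun t _ => ?_) (hinv_sq.const_mul K)
          rw [norm_smul, hnorm_v, norm_neg, Real.norm_of_nonneg (by positivity), mul_comm]
      _ = K * (a⁻¹ - b⁻¹) := by
          rw [integral_const_mul, ← neg_sub, ← integral_eq_sub_of_hasDerivAt hu hinv_sq.neg,
            integral_neg, neg_neg]
  have hζ_abs : 0 < |ζ| := abs_pos.2 hζ
  calc ‖∫ t in a..b, chirp ζ t‖ ≤ b⁻¹ * K + a⁻¹ * K + K * (a⁻¹ - b⁻¹) := by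
        rw [hparts]
        refine norm_sub_le_of_le (norm_sub_le_of_le ?_ ?_) hrem
        · rw [norm_smul, hnorm_v, Real.norm_of_nonneg (inv_nonneg.2 (ha.le.trans hab))]
        · rw [norm_smul, hnorm_v, Real.norm_of_nonneg (inv_nonneg.2 ha.le)]
    _ = (|ζ| * a)⁻¹ := by
        simp only [K]; field_simp; ring

lemma norm_integral_zero_chirp_le {ζ : ℝ} (hζ : ζ ≠ 0) (x : ℝ) :
    ‖∫ t in 0..x, chirp ζ t‖ ≤ 1 + |ζ|⁻¹ := by
  wlog hx : 0 ≤ x generalizing x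
  · have heven : ∫ t in 0..x, chirp ζ t = ∫ t in 0..x, chirp ζ (-t) := by
      simp only [chirp_neg]
    rw [heven, integral_comp_neg, neg_zero, integral_symm, norm_neg]
    exact this (-x) (by linarith)
  have hshort : ∀ y, 0 ≤ y → y ≤ 1 → ‖∫ t in 0..y, chirp ζ t‖ ≤ 1 := fun y hy hy1 =>
    calc _ ≤ 1 * |y - 0| := norm_integral_le_of_norm_le_const fun t _ => (norm_chirp ζ t).le
      _ ≤ 1 := by rwa [sub_zero, abs_of_nonneg hy, one_mul]
  rcases le_total x 1 with hx1 | hx1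
  · linarith [hshort x hx hx1, inv_nonneg.2 (abs_nonneg ζ)]
  · rw [← integral_add_adjacent_intervals ((continuous_chirp ζ).intervalIntegrable 0 1)
      ((continuous_chirp ζ).intervalIntegrable 1 x)]
    calc _ ≤ 1 + (|ζ| * 1)⁻¹ := norm_add_le_of_le (hshort 1 zero_le_one le_rfl)
          (norm_integral_chirp_le_of_pos hζ one_pos hx1)
      _ = 1 + |ζ|⁻¹ := by rw [mul_one]

lemma norm_integral_chirp_le {ζ : ℝ} (hζ : ζ ≠ 0) (a b : ℝ) :
    ‖∫ t in a..b, chirp ζ t‖ ≤ 2 * (1 + |ζ|⁻¹) := by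
  rw [← integral_interval_sub_left ((continuous_chirp ζ).intervalIntegrable 0 b)
    ((continuous_chirp ζ).intervalIntegrable 0 a), two_mul]
  exact norm_sub_le_of_le (norm_integral_zero_chirp_le hζ b) (norm_integral_zero_chirp_le hζ a)

lemma norm_integral_exp_I_mul_quadratic_le {ζ : ℝ} (hζ : ζ ≠ 0) (c d a b : ℝ) :
    ‖∫ t in a..b, cexp (I * ↑(ζ * (t - c) ^ 2 + d))‖ ≤ 2 * (1 + |ζ|⁻¹) := by
  have hfactor : ∀ t : ℝ, cexp (I * ↑(ζ * (t - c) ^ 2 + d)) = cexp (I * ↑d) * chirp ζ (t - c) :=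
    fun t => by rw [chirp, ← Complex.exp_add]; push_cast; ring_nf
  simp_rw [hfactor]
  rw [integral_const_mul, norm_mul, norm_exp_I_mul_ofReal, one_mul,
    integral_comp_sub_right (chirp ζ)]
  exact norm_integral_chirp_le hζ _ _

theorem UPA_distance_orthogonality_integral_general (ζ₁ ζ₂ ζ₃ N₂ : ℝ) (hζ₁ : 0 < ζ₁) :
    Tendsto (fun N₁ : ℝ => (1 / (N₁ * N₂)) *
        ‖(∫ n₂ in (-(N₂/2))..(N₂/2), ∫ n₁ in (-(N₁/2))..(N₁/2),
          Complex.exp (Complex.I *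
            ((ζ₁ * (n₁ - ζ₂ * n₂) ^ 2 + ζ₃ * n₂ ^ 2 : ℝ) : ℂ)))‖)
      atTop (nhds 0) := by
  have hscale : Tendsto (fun N₁ : ℝ => 1 / (N₁ * N₂)) atTop (nhds 0) := by
    simpa only [zero_mul, one_div, mul_inv] using tendsto_inv_atTop_zero.mul_const N₂⁻¹
  refine hscale.zero_mul_isBoundedUnder_le
    (isBoundedUnder_of ⟨2 * (1 + |ζ₁|⁻¹) * |N₂/2 - -(N₂/2)|, fun N₁ => ?_⟩)
  exact (norm_norm _).trans_le (norm_integral_le_of_norm_le_const fun n₂ _ =>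
    norm_integral_exp_I_mul_quadratic_le hζ₁.ne' (ζ₂ * n₂) (ζ₃ * n₂ ^ 2) _ _)

theorem UPA_distance_orthogonality_integral (ζ₁ ζ₂ ζ₃ N₂ : ℝ) (hζ₁ : 0 < ζ₁)
    (hN₂ : 0 < N₂) :
    Tendsto (fun N₁ : ℝ => (1 / (N₁ * N₂)) *
        ‖(∫ n₂ in (-(N₂/2))..(N₂/2), ∫ n₁ in (-(N₁/2))..(N₁/2),
          Complex.exp (Complex.I *
            ((ζ₁ * (n₁ - ζ₂ * n₂) ^ 2 + ζ₃ * n₂ ^ 2 : ℝ) : ℂ)))‖)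
      atTop (nhds 0) :=
  UPA_distance_orthogonality_integral_general ζ₁ ζ₂ ζ₃ N₂ hζ₁
end
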